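/- Let ℓ ≥ m ≥ 2 be integers, at least one of which is even, and let Φ be the total Culler–Shalen seminorm function for K = J(ℓ,m) (with α = ℓm−1 and β = m). Then Φ(0,1) = 2ℓm − 2 if ℓ and m are both even, Φ(0,1) = m²(ℓ−1) − (m−1)(m−2) if ℓ is odd, and Φ(0,1) = m(ℓ−1)² − (ℓ−m) + 2(m−1) if m is odd. (This value is the M-degree of the Â-polynomial of J(ℓ,m).) -/

import Mathlib

noncomputable section

/-- The continued fraction value `cf [n_1, …, n_k] = 1/(n_1 + 1/(n_2 + ⋯ + 1/n_k))`. -/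
def cf : List ℤ → ℚ
  | [] => 0
  | n :: L => 1 / ((n : ℚ) + cf L)

/-- `n⁺`: the number of (0-based) indices `j` with `sign(n_j) = (−1)^j`
(1-based: `sign(n_i) = (−1)^{i−1}`). -/
def nplus (L : List ℤ) : ℕ :=
  ((Finset.range L.length).filter (fun j => (L.getD j 0).sign = (-1) ^ j)).card

/-- `s(n) = n⁺ − n⁻` where `n⁻ = k − n⁺`. -/
def sval (L : List ℤ) : ℤ := 2 * (nplus L : ℤ) - L.length

/-- The set `S` of all finite integer sequences with all entries of absolute value at
least `2` whose continued fraction value is `β/α` or `(β−α)/α`. -/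
def Sset (α β : ℤ) : Set (List ℤ) :=
  {L | (∀ n ∈ L, 2 ≤ |n|) ∧
    (cf L = (β : ℚ) / (α : ℚ) ∨ cf L = ((β : ℚ) - (α : ℚ)) / (α : ℚ))}

/-- The weight `∏_{j=1}^{k} (|n_j| − 1)` of an expansion. -/
def weightProd (L : List ℤ) : ℤ := (L.map (fun n => |n| - 1)).prod

/-- The total Culler–Shalen seminorm
`Φ(p,q) = (1/2)(−|p| + Σ_{n∈S} |p − N_n·q|·∏_j (|n_j| − 1))`, where
`N_n = 2(s(n) − s(n₀))` and `n₀` is the all-even expansion in `S`. -/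
def totalSeminorm (α β : ℤ) (n₀ : List ℤ) (p q : ℤ) : ℚ :=
  (1 / 2) * (-(|(p : ℚ)|) +
    ∑ᶠ L ∈ Sset α β, ((|p - 2 * (sval L - sval n₀) * q| * weightProd L : ℤ) : ℚ))

/-!
An admissible expansion of `p / q` is determined entry by entry: its first entry is one of the
(at most two) admissible integers within `1` of `q / p`, and its tail expands the remainder.
For `α = ℓm - 1`, `β = m` this leaves four expansions: `[ℓ, -m]` and `[ℓ - 1, 2, -2, …]` of
`β / α`, and the negatives of the two expansions of `(m - 1) / (2m - 1)` pushed `ℓ - 2` times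
through `x ↦ 1 / (2 - x)`, which expand `(β - α) / α`. The second exists only for `ℓ ≥ 3` and
the third only for `m ≥ 3`, but otherwise their weights `ℓ - 2`, `m - 2` vanish anyway. With
`s = 2, 2 - m, 2 - ℓ, 3 - ℓ - m` and weights `(ℓ - 1)(m - 1), ℓ - 2, m - 2, 2`, and the all-even
expansion being the first, second or third according to the parities of `ℓ` and `m`,
`Φ(0,1) = Σ |s(n) - s(n₀)| w(n)` is a direct computation.
-/

def Admissible (L : List ℤ) : Prop := ∀ n ∈ L, 2 ≤ |n|

@[simp] theorem admissible_nil : Admissible [] := List.forall_mem_nil _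

@[simp] theorem admissible_cons {n : ℤ} {L : List ℤ} :
    Admissible (n :: L) ↔ 2 ≤ |n| ∧ Admissible L :=
  List.forall_mem_cons

@[simp] theorem admissible_map_neg {L : List ℤ} : Admissible (L.map Neg.neg) ↔ Admissible L := by
  simp only [Admissible, List.forall_mem_map, abs_neg]

@[simp] theorem cf_nil : cf [] = 0 := rfl

@[simp] theorem cf_cons (n : ℤ) (L : List ℤ) : cf (n :: L) = 1 / (n + cf L) := rfl

theorem cf_cons_eq_iff {n : ℤ} {L : List ℤ} {x : ℚ} : cf (n :: L) = x ↔ n + cf L = x⁻¹ := by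
  rw [cf_cons, one_div, inv_eq_iff_eq_inv]

@[simp] theorem cf_map_neg (L : List ℤ) : cf (L.map Neg.neg) = -cf L := by
  induction L with
  | nil => simp
  | cons n L ih =>
    rw [List.map_cons, cf_cons, cf_cons, ih, Int.cast_neg, ← neg_add, div_neg]

theorem Admissible.abs_cf_lt_one {L : List ℤ} (h : Admissible L) : |cf L| < 1 := by
  induction L with
  | nil => simp
  | cons n L ih =>
    rw [admissible_cons] at h
    have hn : (2 : ℚ) ≤ |(n : ℚ)| := by exact_mod_cast h.1
    have hsum : 1 < |(n : ℚ) + cf L| := by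
      linarith [ih h.2, abs_sub_abs_le_abs_add (n : ℚ) (cf L)]
    rw [cf_cons, abs_div, abs_one, div_lt_one (by linarith)]
    exact hsum

theorem Admissible.eq_nil_of_cf_eq_zero {L : List ℤ} (h : Admissible L) (h0 : cf L = 0) :
    L = [] := by
  cases L with
  | nil => rfl
  | cons n T =>
    rw [admissible_cons] at h
    rw [cf_cons, one_div, inv_eq_zero, add_eq_zero_iff_eq_neg'] at h0
    have hn : (2 : ℚ) ≤ |(n : ℚ)| := by exact_mod_cast h.1
    have := h.2.abs_cf_lt_one
    rw [h0, abs_neg] at this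
    linarith

theorem Admissible.exists_cons_of_cf_eq_div {L : List ℤ} (h : Admissible L) {p q : ℤ}
    (hp : 0 < p) (hq : q ≠ 0) (hL : cf L = p / q) :
    ∃ n T, L = n :: T ∧ 2 ≤ |n| ∧ Admissible T ∧ |q - n * p| < p ∧
      cf T = ((q - n * p : ℤ) : ℚ) / p := by
  have hpQ : (0 : ℚ) < p := by exact_mod_cast hp
  cases L with
  | nil =>
    have : (p : ℚ) / q ≠ 0 := div_ne_zero hpQ.ne' (by exact_mod_cast hq)
    exact absurd hL.symm (by simpa using this)
  | cons n T =>
    rw [admissible_cons] at h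
    have hT : cf T = ((q - n * p : ℤ) : ℚ) / p := by
      rw [cf_cons_eq_iff, inv_div] at hL
      rw [eq_div_iff hpQ.ne']
      push_cast
      rw [eq_div_iff hpQ.ne'] at hL
      linarith
    refine ⟨n, T, rfl, h.1, h.2, ?_, hT⟩
    have hb := h.2.abs_cf_lt_one
    rw [hT, abs_div, abs_of_pos hpQ, div_lt_one hpQ] at hb
    exact_mod_cast hb

theorem Admissible.eq_singleton_of_cf_eq_inv {L : List ℤ} (h : Admissible L) {k : ℤ}
    (hk : 2 ≤ |k|) (hL : cf L = 1 / k) : L = [k] := by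
  have hk0 : k ≠ 0 := by rintro rfl; simp at hk
  obtain ⟨n, T, rfl, -, hT, hb, hcf⟩ :=
    h.exists_cons_of_cf_eq_div one_pos hk0 (by exact_mod_cast hL)
  obtain rfl : n = k := by rw [mul_one] at hb; have := abs_lt.1 hb; omega
  rw [hT.eq_nil_of_cf_eq_zero (by simpa using hcf)]

@[simp] theorem map_neg_map_neg (L : List ℤ) : (L.map Neg.neg).map Neg.neg = L :=
  List.map_involutive_iff.2 neg_involutive L

/-- The continued-fraction move `x ↦ 1 / (2 - x)`; `consTwoNeg^[k] [] = [2, -2, 2, …]` expands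
`k / (k + 1)`. -/
def consTwoNeg (L : List ℤ) : List ℤ := 2 :: L.map Neg.neg

theorem forall_mem_iterate_consTwoNeg {P : ℤ → Prop} (hneg : ∀ x, P (-x) ↔ P x) (h2 : P 2)
    (t : ℕ) (L : List ℤ) : (∀ x ∈ consTwoNeg^[t] L, P x) ↔ ∀ x ∈ L, P x := by
  induction t with
  | zero => rfl
  | succ t ih =>
    rw [Function.iterate_succ_apply', consTwoNeg, List.forall_mem_cons, List.forall_mem_map]
    simp only [hneg, h2, true_and, ih]

theorem admissible_iterate_consTwoNeg {t : ℕ} {L : List ℤ} :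
    Admissible (consTwoNeg^[t] L) ↔ Admissible L :=
  forall_mem_iterate_consTwoNeg (fun x => by rw [abs_neg]) (by norm_num) t L

theorem cf_iterate_consTwoNeg {c d : ℚ} (hc : 0 ≤ c) (hd : 0 < d) {L : List ℤ}
    (hL : cf L = c / (c + d)) (t : ℕ) :
    cf (consTwoNeg^[t] L) = (c + t * d) / (c + (t + 1) * d) := by
  induction t with
  | zero => simpa using hL
  | succ t ih =>
    have h1 : 0 < c + (t + 1) * d := by positivity
    have h2 : 0 < c + (t + 2) * d := by positivity
    rw [Function.iterate_succ_apply', consTwoNeg, cf_cons_eq_iff, cf_map_neg, ih, inv_div]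
    push_cast
    field_simp
    ring

theorem Admissible.exists_eq_iterate_of_cf_eq {L : List ℤ} (h : Admissible L) {c d : ℤ}
    (hc : 0 ≤ c) (hd : 0 < d) (t : ℕ)
    (hL : cf L = ((c + t * d : ℤ) : ℚ) / ((c + (t + 1) * d : ℤ) : ℚ)) :
    ∃ T, L = consTwoNeg^[t] T ∧ Admissible T ∧ cf T = (c : ℚ) / ((c + d : ℤ) : ℚ) := by
  induction t generalizing L with
  | zero => exact ⟨L, rfl, h, by simpa using hL⟩
  | succ t ih =>
    have hp : 0 < c + (t + 1 : ℕ) * d := by positivity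
    obtain ⟨n, T, rfl, hn, hT, hb, hcf⟩ := h.exists_cons_of_cf_eq_div hp (by positivity) hL
    -- `d ≤ c + (t + 1) d` leaves `2` as the only admissible integer within `1` of
    -- `(c + (t + 2) d) / (c + (t + 1) d)`
    obtain rfl : n = 2 := by
      have hdp : d ≤ c + (t + 1 : ℕ) * d := by push_cast; nlinarith
      obtain ⟨hb1, hb2⟩ := abs_lt.1 hb
      rcases le_abs'.1 hn with hn | hn
      · nlinarith
      · by_contra hne
        nlinarith [show 3 ≤ n by omega]
    have hneg : cf (T.map Neg.neg) = ((c + t * d : ℤ) : ℚ) / ((c + (t + 1) * d : ℤ) : ℚ) := by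
      rw [cf_map_neg, hcf, ← neg_div]
      push_cast
      ring
    obtain ⟨T₀, hT₀, hadm, hcf₀⟩ := ih (admissible_map_neg.2 hT) hneg
    refine ⟨T₀, ?_, hadm, hcf₀⟩
    rw [Function.iterate_succ_apply', ← hT₀, consTwoNeg, map_neg_map_neg]

theorem cf_iterate_consTwoNeg_nil (k : ℕ) : cf (consTwoNeg^[k] []) = k / (k + 1) := by
  simpa using cf_iterate_consTwoNeg le_rfl one_pos (L := []) (by simp) k

theorem Admissible.eq_iterate_nil_of_cf_eq {L : List ℤ} (h : Admissible L) (k : ℕ)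
    (hL : cf L = (k : ℚ) / (k + 1)) : L = consTwoNeg^[k] [] := by
  obtain ⟨T, rfl, hT, hcf⟩ :=
    h.exists_eq_iterate_of_cf_eq le_rfl one_pos k (by push_cast; simpa using hL)
  rw [hT.eq_nil_of_cf_eq_zero (by simpa using hcf)]

theorem sval_eq_sum {L : List ℤ} (h : ∀ x ∈ L, x ≠ 0) :
    sval L = ∑ j ∈ Finset.range L.length, (L.getD j 0).sign * (-1) ^ j := by
  have hlen : (L.length : ℤ) = ∑ j ∈ Finset.range L.length, (1 : ℤ) := by simp
  rw [sval, nplus, Finset.card_filter, Nat.cast_sum, Finset.mul_sum, hlen,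
    ← Finset.sum_sub_distrib]
  refine Finset.sum_congr rfl fun j hj => ?_
  have hx : L.getD j 0 ≠ 0 :=
    h _ (by rw [List.getD_eq_getElem _ _ (Finset.mem_range.1 hj)]; exact List.getElem_mem _)
  generalize L.getD j 0 = x at hx ⊢
  have hsign : x.sign = 1 ∨ x.sign = -1 := by
    rcases hx.lt_or_gt with hneg | hpos
    · exact Or.inr (Int.sign_eq_neg_one_of_neg hneg)
    · exact Or.inl (Int.sign_eq_one_of_pos hpos)
  rcases hsign with hs | hs <;> rcases neg_one_pow_eq_or ℤ j with hp | hp <;>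
    simp only [hs, hp] <;> norm_num

theorem sval_cons {n : ℤ} {L : List ℤ} (h : ∀ x ∈ n :: L, x ≠ 0) :
    sval (n :: L) = n.sign - sval L := by
  rw [sval_eq_sum h, sval_eq_sum fun x hx => h x (List.mem_cons_of_mem n hx),
    List.length_cons, Finset.sum_range_succ']
  simp [pow_succ, Finset.sum_neg_distrib, neg_add_eq_sub]

@[simp] theorem sval_nil : sval [] = 0 := rfl

theorem sval_map_neg {L : List ℤ} (h : ∀ x ∈ L, x ≠ 0) : sval (L.map Neg.neg) = -sval L := by
  induction L with
  | nil => rfl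
  | cons n L ih =>
    have hL : ∀ x ∈ L, x ≠ 0 := fun x hx => h x (List.mem_cons_of_mem n hx)
    rw [List.map_cons, sval_cons, sval_cons h, ih hL, Int.sign_neg]
    · ring
    · exact List.forall_mem_cons.2
        ⟨neg_ne_zero.2 (h n List.mem_cons_self), List.forall_mem_map.2 fun x hx => neg_ne_zero.2 (hL x hx)⟩

theorem sval_consTwoNeg {L : List ℤ} (h : ∀ x ∈ L, x ≠ 0) :
    sval (consTwoNeg L) = 1 + sval L := by
  rw [consTwoNeg, sval_cons, sval_map_neg h]
  · simp
  · exact List.forall_mem_cons.2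
      ⟨two_ne_zero, List.forall_mem_map.2 fun x hx => neg_ne_zero.2 (h x hx)⟩

theorem ne_zero_of_mem_iterate_consTwoNeg {t : ℕ} {L : List ℤ} (h : ∀ x ∈ L, x ≠ 0) :
    ∀ x ∈ consTwoNeg^[t] L, x ≠ 0 :=
  (forall_mem_iterate_consTwoNeg (P := (· ≠ 0)) (fun _ => neg_ne_zero) two_ne_zero t L).2 h

theorem sval_iterate_consTwoNeg {L : List ℤ} (h : ∀ x ∈ L, x ≠ 0) (t : ℕ) :
    sval (consTwoNeg^[t] L) = t + sval L := by
  induction t with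
  | zero => simp
  | succ t ih =>
    rw [Function.iterate_succ_apply', sval_consTwoNeg, ih]
    · push_cast; ring
    · exact ne_zero_of_mem_iterate_consTwoNeg h

@[simp] theorem weightProd_nil : weightProd [] = 1 := rfl

@[simp] theorem weightProd_cons (n : ℤ) (L : List ℤ) :
    weightProd (n :: L) = (|n| - 1) * weightProd L := by
  simp [weightProd]

@[simp] theorem weightProd_map_neg (L : List ℤ) : weightProd (L.map Neg.neg) = weightProd L := by
  simp [weightProd, Function.comp_def]

@[simp] theorem weightProd_iterate_consTwoNeg (t : ℕ) (L : List ℤ) :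
    weightProd (consTwoNeg^[t] L) = weightProd L := by
  induction t with
  | zero => rfl
  | succ t ih => simp [Function.iterate_succ_apply', consTwoNeg, ih]

namespace DoubleTwist

variable {ℓ m : ℕ}

def expA (ℓ m : ℕ) : List ℤ := [ℓ, -m]

def expB (ℓ m : ℕ) : List ℤ := ((ℓ : ℤ) - 1) :: consTwoNeg^[m - 1] []

def expC (ℓ m : ℕ) : List ℤ := (consTwoNeg^[ℓ - 2] [2, (m : ℤ) - 1]).map Neg.neg

def expD (ℓ m : ℕ) : List ℤ :=
  (consTwoNeg^[ℓ - 2] (3 :: (consTwoNeg^[m - 2] []).map Neg.neg)).map Neg.neg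

theorem eq_expA_or_expB_of_cf_eq {L : List ℤ} (h : Admissible L) (hm : 2 ≤ m)
    (hL : cf L = ((m : ℤ) : ℚ) / (((ℓ : ℤ) * m - 1 : ℤ) : ℚ)) :
    L = expA ℓ m ∨ (3 ≤ ℓ ∧ L = expB ℓ m) := by
  have hmZ : (2 : ℤ) ≤ m := by exact_mod_cast hm
  have hmQ : (m : ℚ) ≠ 0 := by positivity
  have hq : (ℓ : ℤ) * m - 1 ≠ 0 := by
    rcases Nat.eq_zero_or_pos ℓ with rfl | hℓ
    · norm_num
    · exact (by nlinarith : (0 : ℤ) < ℓ * m - 1).ne'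
  obtain ⟨n, T, rfl, hn, hT, hb, hcf⟩ := h.exists_cons_of_cf_eq_div (by omega) hq hL
  obtain ⟨hb1, hb2⟩ := abs_lt.1 hb
  obtain rfl | rfl : n = ℓ ∨ n = ℓ - 1 := by
    have h1 : (ℓ - n) * m < m + 1 := by linarith
    have h2 : 1 - m < (ℓ - n) * m := by linarith
    have : ℓ - n < 2 := by nlinarith
    have : -1 < ℓ - n := by nlinarith
    omega
  · left
    have := hT.eq_singleton_of_cf_eq_inv (k := -m) (by rw [abs_neg]; simpa using hmZ)
      (by rw [hcf]; push_cast; field_simp; ring)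
    rw [this, expA]
  · right
    refine ⟨by rw [le_abs'] at hn; omega, ?_⟩
    rw [expB, hT.eq_iterate_nil_of_cf_eq (m - 1) ?_]
    rw [hcf, Nat.cast_sub (by omega)]
    push_cast
    rw [sub_add_cancel]
    ring

theorem eq_of_cf_eq_sub_one_div {L : List ℤ} (h : Admissible L) (hm : 2 ≤ m)
    (hL : cf L = (((m : ℤ) - 1 : ℤ) : ℚ) / (((m : ℤ) - 1 + m : ℤ) : ℚ)) :
    (3 ≤ m ∧ L = [2, (m : ℤ) - 1]) ∨ L = 3 :: (consTwoNeg^[m - 2] []).map Neg.neg := by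
  have hmZ : (2 : ℤ) ≤ m := by exact_mod_cast hm
  obtain ⟨n, T, rfl, hn, hT, hb, hcf⟩ := h.exists_cons_of_cf_eq_div (by omega) (by omega) hL
  obtain ⟨hb1, hb2⟩ := abs_lt.1 hb
  obtain rfl | rfl : n = 2 ∨ n = 3 := by
    rcases le_abs'.1 hn with hn | hn
    · nlinarith
    · by_contra hne
      nlinarith [show 4 ≤ n by omega]
  · have hm3 : 3 ≤ m := by nlinarith
    refine Or.inl ⟨hm3, ?_⟩
    rw [hT.eq_singleton_of_cf_eq_inv (k := m - 1) (by rw [abs_of_nonneg (by omega)]; omega)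
      (by rw [hcf]; push_cast; ring_nf)]
  · right
    have hneg : cf (T.map Neg.neg) = ((m - 2 : ℕ) : ℚ) / ((m - 2 : ℕ) + 1) := by
      rw [cf_map_neg, hcf, Nat.cast_sub hm]
      push_cast
      rw [show (m : ℚ) - 2 + 1 = m - 1 by ring, ← neg_div]
      ring
    rw [← (admissible_map_neg.2 hT).eq_iterate_nil_of_cf_eq (m - 2) hneg, map_neg_map_neg]

theorem eq_expC_or_expD_of_cf_eq {L : List ℤ} (h : Admissible L) (hm : 2 ≤ m) (hℓ : 2 ≤ ℓ)
    (hL : cf L = (((m : ℤ) : ℚ) - (((ℓ : ℤ) * m - 1 : ℤ) : ℚ)) / (((ℓ : ℤ) * m - 1 : ℤ) : ℚ)) :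
    (3 ≤ m ∧ L = expC ℓ m) ∨ L = expD ℓ m := by
  obtain ⟨t, rfl⟩ : ∃ t, ℓ = t + 2 := ⟨ℓ - 2, by omega⟩
  have hneg : cf (L.map Neg.neg) =
      (((m - 1 : ℤ) + t * m : ℤ) : ℚ) / (((m - 1 : ℤ) + (t + 1) * m : ℤ) : ℚ) := by
    rw [cf_map_neg, hL, ← neg_div]
    push_cast
    ring_nf
  obtain ⟨T, hLT, hT, hcf⟩ := (admissible_map_neg.2 h).exists_eq_iterate_of_cf_eq
    (by omega) (by omega) t hneg
  have hL' : L = (consTwoNeg^[t] T).map Neg.neg := by rw [← hLT, map_neg_map_neg]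
  rcases eq_of_cf_eq_sub_one_div hT hm hcf with ⟨hm3, rfl⟩ | rfl
  · exact Or.inl ⟨hm3, by simpa [expC] using hL'⟩
  · exact Or.inr (by simpa [expD] using hL')

theorem cf_expA (hm : m ≠ 0) : cf (expA ℓ m) = ((m : ℤ) : ℚ) / (((ℓ : ℤ) * m - 1 : ℤ) : ℚ) := by
  have hmQ : (m : ℚ) ≠ 0 := by exact_mod_cast hm
  rw [expA, cf_cons_eq_iff, inv_div]
  simp only [cf_cons, cf_nil, add_zero]
  push_cast
  field_simp
  ring

theorem cf_expB (hm : 1 ≤ m) : cf (expB ℓ m) = ((m : ℤ) : ℚ) / (((ℓ : ℤ) * m - 1 : ℤ) : ℚ) := by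
  have hmQ : (m : ℚ) ≠ 0 := by positivity
  rw [expB, cf_cons, cf_iterate_consTwoNeg_nil, Nat.cast_sub hm]
  push_cast
  rw [sub_add_cancel, one_div, inv_eq_iff_eq_inv, inv_div]
  field_simp
  ring

theorem cf_map_neg_iterate_of_cf_eq (hm : 2 ≤ m) (hℓ : 2 ≤ ℓ) {T : List ℤ}
    (hT : cf T = ((m : ℚ) - 1) / ((m - 1) + m)) :
    cf ((consTwoNeg^[ℓ - 2] T).map Neg.neg) =
      (((m : ℤ) : ℚ) - (((ℓ : ℤ) * m - 1 : ℤ) : ℚ)) / (((ℓ : ℤ) * m - 1 : ℤ) : ℚ) := by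
  have hmQ : (2 : ℚ) ≤ m := by exact_mod_cast hm
  rw [cf_map_neg, cf_iterate_consTwoNeg (by linarith) (by linarith) hT, Nat.cast_sub hℓ, ← neg_div]
  push_cast
  ring_nf

theorem cf_expC (hm : 2 ≤ m) (hℓ : 2 ≤ ℓ) :
    cf (expC ℓ m) =
      (((m : ℤ) : ℚ) - (((ℓ : ℤ) * m - 1 : ℤ) : ℚ)) / (((ℓ : ℤ) * m - 1 : ℤ) : ℚ) := by
  have hm1 : (m : ℚ) - 1 ≠ 0 := by
    have : (2 : ℚ) ≤ m := by exact_mod_cast hm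
    linarith
  refine cf_map_neg_iterate_of_cf_eq hm hℓ ?_
  rw [cf_cons_eq_iff, inv_div]
  simp only [cf_cons, cf_nil, add_zero]
  push_cast
  field_simp
  ring

theorem cf_expD (hm : 2 ≤ m) (hℓ : 2 ≤ ℓ) :
    cf (expD ℓ m) =
      (((m : ℤ) : ℚ) - (((ℓ : ℤ) * m - 1 : ℤ) : ℚ)) / (((ℓ : ℤ) * m - 1 : ℤ) : ℚ) := by
  have hm1 : (m : ℚ) - 1 ≠ 0 := by
    have : (2 : ℚ) ≤ m := by exact_mod_cast hm
    linarith
  refine cf_map_neg_iterate_of_cf_eq hm hℓ ?_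
  rw [cf_cons_eq_iff, inv_div, cf_map_neg, cf_iterate_consTwoNeg_nil, Nat.cast_sub hm]
  push_cast
  rw [show (m : ℚ) - 2 + 1 = m - 1 by ring]
  field_simp
  ring

theorem admissible_expA (hm : 2 ≤ m) (hℓ : 2 ≤ ℓ) : Admissible (expA ℓ m) := by
  simp only [expA, admissible_cons, abs_neg, Nat.abs_cast, admissible_nil, and_true]
  exact ⟨by exact_mod_cast hℓ, by exact_mod_cast hm⟩

theorem admissible_expB (hℓ : 3 ≤ ℓ) : Admissible (expB ℓ m) := by
  rw [expB, admissible_cons, admissible_iterate_consTwoNeg]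
  exact ⟨by rw [abs_of_nonneg (by omega)]; omega, admissible_nil⟩

theorem admissible_expC (hm : 3 ≤ m) : Admissible (expC ℓ m) := by
  rw [expC, admissible_map_neg, admissible_iterate_consTwoNeg]
  simp only [admissible_cons, admissible_nil, and_true]
  exact ⟨by norm_num, by rw [abs_of_nonneg (by omega)]; omega⟩

theorem admissible_expD : Admissible (expD ℓ m) := by
  rw [expD, admissible_map_neg, admissible_iterate_consTwoNeg, admissible_cons,
    admissible_map_neg, admissible_iterate_consTwoNeg]
  exact ⟨by norm_num, admissible_nil⟩

theorem mem_Sset_iff (hm : 2 ≤ m) (hℓ : 2 ≤ ℓ) {L : List ℤ} :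
    L ∈ Sset ((ℓ : ℤ) * m - 1) m ↔
      L = expA ℓ m ∨ (3 ≤ ℓ ∧ L = expB ℓ m) ∨ (3 ≤ m ∧ L = expC ℓ m) ∨ L = expD ℓ m := by
  change Admissible L ∧ _ ↔ _
  constructor
  · rintro ⟨h, hL | hL⟩
    · exact (eq_expA_or_expB_of_cf_eq h hm hL).imp_right Or.inl
    · exact Or.inr (Or.inr (eq_expC_or_expD_of_cf_eq h hm hℓ hL))
  · rintro (rfl | ⟨hℓ3, rfl⟩ | ⟨hm3, rfl⟩ | rfl)
    · exact ⟨admissible_expA hm hℓ, Or.inl (cf_expA (by omega))⟩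
    · exact ⟨admissible_expB hℓ3, Or.inl (cf_expB (by omega))⟩
    · exact ⟨admissible_expC hm3, Or.inr (cf_expC hm hℓ)⟩
    · exact ⟨admissible_expD, Or.inr (cf_expD hm hℓ)⟩

theorem sval_expA (hm : m ≠ 0) (hℓ : ℓ ≠ 0) : sval (expA ℓ m) = 2 := by
  rw [expA, sval_cons (by simp [hm, hℓ]), sval_cons (by simp [hm]), sval_nil,
    Int.sign_neg, Int.sign_natCast_of_ne_zero hm, Int.sign_natCast_of_ne_zero hℓ]
  norm_num

theorem sval_expB (hm : 1 ≤ m) (hℓ : 2 ≤ ℓ) : sval (expB ℓ m) = 2 - m := by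
  have hnil : ∀ x ∈ ([] : List ℤ), x ≠ 0 := List.forall_mem_nil _
  rw [expB, sval_cons (List.forall_mem_cons.2 ⟨by omega, ne_zero_of_mem_iterate_consTwoNeg hnil⟩),
    sval_iterate_consTwoNeg hnil, Int.sign_eq_one_of_pos (by omega), sval_nil, Nat.cast_sub hm]
  push_cast
  ring

theorem sval_expC (hm : 2 ≤ m) (hℓ : 2 ≤ ℓ) : sval (expC ℓ m) = 2 - ℓ := by
  have hbase : ∀ x ∈ [2, (m : ℤ) - 1], x ≠ 0 := by
    simp only [List.mem_cons, List.not_mem_nil, or_false, forall_eq_or_imp, forall_eq]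
    omega
  rw [expC, sval_map_neg (ne_zero_of_mem_iterate_consTwoNeg hbase),
    sval_iterate_consTwoNeg hbase, sval_cons hbase, sval_cons (fun x hx => hbase x (List.mem_cons_of_mem 2 hx)),
    sval_nil,
    Int.sign_eq_one_of_pos (show (0 : ℤ) < m - 1 by omega),
    Int.sign_eq_one_of_pos (show (0 : ℤ) < 2 by norm_num), Nat.cast_sub hℓ]
  ring

theorem sval_expD (hm : 2 ≤ m) (hℓ : 2 ≤ ℓ) : sval (expD ℓ m) = 3 - ℓ - m := by
  have hnil : ∀ x ∈ ([] : List ℤ), x ≠ 0 := List.forall_mem_nil _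
  have halt : ∀ x ∈ (consTwoNeg^[m - 2] []).map Neg.neg, x ≠ 0 :=
    List.forall_mem_map.2 fun x hx => neg_ne_zero.2 (ne_zero_of_mem_iterate_consTwoNeg hnil x hx)
  have hbase : ∀ x ∈ 3 :: (consTwoNeg^[m - 2] []).map Neg.neg, x ≠ 0 :=
    List.forall_mem_cons.2 ⟨by norm_num, halt⟩
  rw [expD, sval_map_neg (ne_zero_of_mem_iterate_consTwoNeg hbase),
    sval_iterate_consTwoNeg hbase, sval_cons hbase,
    sval_map_neg (ne_zero_of_mem_iterate_consTwoNeg hnil), sval_iterate_consTwoNeg hnil,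
    sval_nil, Int.sign_eq_one_of_pos (show (0 : ℤ) < 3 by norm_num), Nat.cast_sub hℓ,
    Nat.cast_sub hm]
  ring

theorem weightProd_expA : weightProd (expA ℓ m) = (ℓ - 1) * (m - 1) := by
  simp [expA]

theorem weightProd_expB (hℓ : 1 ≤ ℓ) : weightProd (expB ℓ m) = ℓ - 2 := by
  rw [expB, weightProd_cons, weightProd_iterate_consTwoNeg, weightProd_nil,
    abs_of_nonneg (by omega)]
  ring

theorem weightProd_expC (hm : 1 ≤ m) : weightProd (expC ℓ m) = m - 2 := by
  rw [expC, weightProd_map_neg, weightProd_iterate_consTwoNeg]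
  simp only [weightProd_cons, weightProd_nil, abs_of_nonneg (show (0 : ℤ) ≤ m - 1 by omega)]
  norm_num
  ring

theorem weightProd_expD : weightProd (expD ℓ m) = 2 := by
  simp [expD]

theorem finsum_mem_Sset {M : Type*} [AddCommMonoid M] (hm : 2 ≤ m) (hℓ : 2 ≤ ℓ)
    (g : List ℤ → M) (hB : ℓ = 2 → g (expB ℓ m) = 0) (hC : m = 2 → g (expC ℓ m) = 0) :
    ∑ᶠ L ∈ Sset ((ℓ : ℤ) * m - 1) m, g L =
      g (expA ℓ m) + g (expB ℓ m) + g (expC ℓ m) + g (expD ℓ m) := by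
  -- `expA, expB` expand `β / α` and `expC, expD` expand `(β - α) / α`; within each pair
  -- the expansions are told apart by `sval`
  have hcf : ((m : ℤ) : ℚ) / (((ℓ : ℤ) * m - 1 : ℤ) : ℚ) ≠
      (((m : ℤ) : ℚ) - (((ℓ : ℤ) * m - 1 : ℤ) : ℚ)) / (((ℓ : ℤ) * m - 1 : ℤ) : ℚ) := by
    have : (((ℓ : ℤ) * m - 1 : ℤ) : ℚ) ≠ 0 := by
      have : (4 : ℤ) ≤ ℓ * m := by nlinarith
      exact_mod_cast (by omega : (ℓ : ℤ) * m - 1 ≠ 0)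
    rw [Ne, div_left_inj' this]
    intro h
    exact this (by linarith)
  have hAB : expA ℓ m ≠ expB ℓ m := fun h => by
    have := congrArg sval h
    rw [sval_expA (by omega) (by omega), sval_expB (by omega) hℓ] at this
    omega
  have hCD : expC ℓ m ≠ expD ℓ m := fun h => by
    have := congrArg sval h
    rw [sval_expC hm hℓ, sval_expD hm hℓ] at this
    omega
  have hAC : expA ℓ m ≠ expC ℓ m := fun h => hcf (by
    rw [← cf_expA (by omega), h, cf_expC hm hℓ])
  have hAD : expA ℓ m ≠ expD ℓ m := fun h => hcf (by
    rw [← cf_expA (by omega), h, cf_expD hm hℓ])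
  have hBC : expB ℓ m ≠ expC ℓ m := fun h => hcf (by
    rw [← cf_expB (by omega), h, cf_expC hm hℓ])
  have hBD : expB ℓ m ≠ expD ℓ m := fun h => hcf (by
    rw [← cf_expB (by omega), h, cf_expD hm hℓ])
  rw [finsum_mem_eq_sum_of_inter_support_eq g (t := {expA ℓ m, expB ℓ m, expC ℓ m, expD ℓ m}),
    Finset.sum_insert (by simp [hAB, hAC, hAD]), Finset.sum_insert (by simp [hBC, hBD]),
    Finset.sum_pair hCD, add_assoc, add_assoc]
  ext L
  simp only [Set.mem_inter_iff, Function.mem_support, mem_Sset_iff hm hℓ, Finset.coe_insert,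
    Finset.coe_singleton, Set.mem_insert_iff, Set.mem_singleton_iff]
  refine and_congr_left fun hg => ⟨?_, ?_⟩
  · rintro (h | ⟨-, h⟩ | ⟨-, h⟩ | h) <;> simp only [h, true_or, or_true]
  · rintro (rfl | rfl | rfl | rfl)
    · exact Or.inl rfl
    · exact Or.inr (Or.inl ⟨by by_contra; exact hg (hB (by omega)), rfl⟩)
    · exact Or.inr (Or.inr (Or.inl ⟨by by_contra; exact hg (hC (by omega)), rfl⟩))
    · exact Or.inr (Or.inr (Or.inr rfl))

theorem totalSeminorm_zero_one (hm : 2 ≤ m) (hℓ : 2 ≤ ℓ) (n₀ : List ℤ) :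
    totalSeminorm ((ℓ : ℤ) * m - 1) m n₀ 0 1 =
      ((|2 - sval n₀| * ((ℓ - 1) * (m - 1)) + |2 - m - sval n₀| * (ℓ - 2) +
        |2 - ℓ - sval n₀| * (m - 2) + |3 - ℓ - m - sval n₀| * 2 : ℤ) : ℚ) := by
  rw [totalSeminorm, finsum_mem_Sset hm hℓ _ (fun h => by simp [weightProd_expB, h])
      (fun h => by simp [weightProd_expC, h]),
    sval_expA (by omega) (by omega), sval_expB (by omega) hℓ, sval_expC hm hℓ, sval_expD hm hℓ,
    weightProd_expA, weightProd_expB (by omega), weightProd_expC (by omega), weightProd_expD]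
  simp only [zero_sub, mul_one, abs_neg, abs_mul]
  push_cast
  ring

theorem eq_of_forall_even (hm : 2 ≤ m) (hℓ : 2 ≤ ℓ) {L : List ℤ}
    (hL : L ∈ Sset ((ℓ : ℤ) * m - 1) m) (heven : ∀ n ∈ L, Even n) :
    (Even ℓ ∧ Even m ∧ L = expA ℓ m) ∨ (Odd ℓ ∧ L = expB ℓ m) ∨ (Odd m ∧ L = expC ℓ m) := by
  have hiter : ∀ (t : ℕ) (T : List ℤ), (∀ n ∈ (consTwoNeg^[t] T).map Neg.neg, Even n) →
      ∀ n ∈ T, Even n := fun t T h =>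
    (forall_mem_iterate_consTwoNeg (P := Even) (fun _ => even_neg) even_two t T).1
      fun n hn => even_neg.1 (List.forall_mem_map.1 h n hn)
  rcases (mem_Sset_iff hm hℓ).1 hL with rfl | ⟨-, rfl⟩ | ⟨-, rfl⟩ | rfl
  · simp only [expA, List.mem_cons, List.not_mem_nil, or_false, forall_eq_or_imp, forall_eq,
      even_neg, Int.even_coe_nat] at heven
    exact Or.inl ⟨heven.1, heven.2, rfl⟩
  · have h := heven _ List.mem_cons_self
    exact Or.inr (Or.inl ⟨by simpa [Int.even_sub_one] using h, rfl⟩)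
  · have h := hiter _ _ heven _ (List.mem_cons_of_mem _ List.mem_cons_self)
    exact Or.inr (Or.inr ⟨by simpa [Int.even_sub_one] using h, rfl⟩)
  · exact absurd (hiter _ _ heven _ List.mem_cons_self) (by decide)

end DoubleTwist

/-- Theorem (`M`-degree of the `Â`-polynomial of `J(ℓ,m)`, `α = ℓm−1`, `β = m`,
`ℓ ≥ m ≥ 2`): `Φ(0,1) = 2ℓm − 2` if `ℓ, m` both even,
`Φ(0,1) = m²(ℓ−1) − (m−1)(m−2)` if `ℓ` is odd, and
`Φ(0,1) = m(ℓ−1)² − (ℓ−m) + 2(m−1)` if `m` is odd. -/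
theorem Mdegree_J_ell_m (ℓ m : ℕ) (hm : 2 ≤ m) (hml : m ≤ ℓ)
    (hpar : Even ℓ ∨ Even m) (n₀ : List ℤ)
    (hn₀S : n₀ ∈ Sset ((ℓ : ℤ) * m - 1) (m : ℤ)) (hn₀even : ∀ n ∈ n₀, Even n) :
    ((Even ℓ ∧ Even m) →
      totalSeminorm ((ℓ : ℤ) * m - 1) (m : ℤ) n₀ 0 1 =
        2 * (ℓ : ℚ) * (m : ℚ) - 2) ∧
    (Odd ℓ →
      totalSeminorm ((ℓ : ℤ) * m - 1) (m : ℤ) n₀ 0 1 =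
        (m : ℚ) ^ 2 * ((ℓ : ℚ) - 1) - ((m : ℚ) - 1) * ((m : ℚ) - 2)) ∧
    (Odd m →
      totalSeminorm ((ℓ : ℤ) * m - 1) (m : ℤ) n₀ 0 1 =
        (m : ℚ) * ((ℓ : ℚ) - 1) ^ 2 - ((ℓ : ℚ) - (m : ℚ)) + 2 * ((m : ℚ) - 1)) := by
  have hℓ : 2 ≤ ℓ := hm.trans hml
  rw [DoubleTwist.totalSeminorm_zero_one hm hℓ n₀]
  rcases DoubleTwist.eq_of_forall_even hm hℓ hn₀S hn₀even with
    ⟨hℓe, hme, rfl⟩ | ⟨hℓo, rfl⟩ | ⟨hmo, rfl⟩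
  · refine ⟨fun _ => ?_, fun h => absurd hℓe (Nat.not_even_iff_odd.2 h),
      fun h => absurd hme (Nat.not_even_iff_odd.2 h)⟩
    rw [DoubleTwist.sval_expA (by omega) (by omega)]
    simp (disch := omega) only [abs_of_nonneg, abs_of_nonpos]
    push_cast
    ring
  · have hme : Even m := hpar.resolve_left (Nat.not_even_iff_odd.2 hℓo)
    refine ⟨fun h => absurd h.1 (Nat.not_even_iff_odd.2 hℓo), fun _ => ?_,
      fun h => absurd hme (Nat.not_even_iff_odd.2 h)⟩
    rw [DoubleTwist.sval_expB (by omega) hℓ]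
    simp (disch := omega) only [abs_of_nonneg, abs_of_nonpos]
    push_cast
    ring
  · have hℓe : Even ℓ := hpar.resolve_right (Nat.not_even_iff_odd.2 hmo)
    refine ⟨fun h => absurd h.2 (Nat.not_even_iff_odd.2 hmo),
      fun h => absurd hℓe (Nat.not_even_iff_odd.2 h), fun _ => ?_⟩
    rw [DoubleTwist.sval_expC hm hℓ]
    simp (disch := omega) only [abs_of_nonneg, abs_of_nonpos]
    push_cast
    ring
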